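/- Let y = Ax + e where A ∈ ℝ^{m×n} has restricted isometry constants δ_k and δ_{2k} of orders k and 2k with δ_{2k} < 1, x ∈ ℝⁿ is a nonnegative k-sparse vector, and e ∈ ℝ^m. Let Λ ⊆ {1,…,n} with |Λ| ≤ k, and let z* be a minimizer of ‖y − Az‖₂ over all z ∈ ℝⁿ with supp(z) ⊆ Λ and z ≥ 0. Then ‖z* − x‖₂ ≤ (1/√(1 − δ_{2k}²)) · ‖(z* − x)_{Λ̄}‖₂ + (√(1 + δ_k)/(1 − δ_{2k})) · ‖e‖₂, where Λ̄ = {1,…,n} \ Λ. -/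

import Mathlib

open Matrix

/-- The Euclidean (ℓ₂) norm of a vector in ℝ^d. -/
noncomputable def l2 {d : ℕ} (v : Fin d → ℝ) : ℝ := Real.sqrt (∑ i, v i ^ 2)

/-- The restricted isometry constant of order `k` of a matrix `A`: the smallest `δ ≥ 0`
such that `(1 - δ)‖x‖² ≤ ‖Ax‖² ≤ (1 + δ)‖x‖²` for all `k`-sparse vectors `x`. -/
noncomputable def RIC {m n : ℕ} (A : Matrix (Fin m) (Fin n) ℝ) (k : ℕ) : ℝ :=
  sInf {δ : ℝ | 0 ≤ δ ∧ ∀ x : Fin n → ℝ, (Function.support x).ncard ≤ k →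
    (1 - δ) * l2 x ^ 2 ≤ l2 (A *ᵥ x) ^ 2 ∧ l2 (A *ᵥ x) ^ 2 ≤ (1 + δ) * l2 x ^ 2}

namespace Stmt13Aux

/-! ### Inner product algebra -/

def ip {d : ℕ} (u v : Fin d → ℝ) : ℝ := ∑ i, u i * v i

lemma l2_nonneg {d : ℕ} (v : Fin d → ℝ) : 0 ≤ l2 v := Real.sqrt_nonneg _

lemma l2_sq {d : ℕ} (v : Fin d → ℝ) : l2 v ^ 2 = ∑ i, v i ^ 2 :=
  Real.sq_sqrt (by positivity)

lemma ip_self {d : ℕ} (v : Fin d → ℝ) : ip v v = l2 v ^ 2 := by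
  rw [l2_sq]; exact Finset.sum_congr rfl fun i _ => (sq (v i)).symm ▸ by ring

lemma ip_nonneg_self {d : ℕ} (v : Fin d → ℝ) : 0 ≤ ip v v := by
  rw [ip_self]; positivity

lemma ip_comm {d : ℕ} (u v : Fin d → ℝ) : ip u v = ip v u := by
  unfold ip; exact Finset.sum_congr rfl fun i _ => mul_comm _ _

lemma ip_add_left {d : ℕ} (u v w : Fin d → ℝ) : ip (u + v) w = ip u w + ip v w := by
  unfold ip; rw [← Finset.sum_add_distrib]; exact Finset.sum_congr rfl fun i _ => by
    simp [add_mul]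

lemma ip_sub_left {d : ℕ} (u v w : Fin d → ℝ) : ip (u - v) w = ip u w - ip v w := by
  unfold ip; rw [← Finset.sum_sub_distrib]; exact Finset.sum_congr rfl fun i _ => by
    simp [sub_mul]

lemma ip_smul_left {d : ℕ} (c : ℝ) (u v : Fin d → ℝ) : ip (c • u) v = c * ip u v := by
  unfold ip; rw [Finset.mul_sum]; exact Finset.sum_congr rfl fun i _ => by
    simp [mul_assoc]

lemma ip_add_right {d : ℕ} (u v w : Fin d → ℝ) : ip u (v + w) = ip u v + ip u w := by
  rw [ip_comm, ip_add_left, ip_comm v u, ip_comm w u]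

lemma ip_sub_right {d : ℕ} (u v w : Fin d → ℝ) : ip u (v - w) = ip u v - ip u w := by
  rw [ip_comm, ip_sub_left, ip_comm v u, ip_comm w u]

lemma ip_smul_right {d : ℕ} (c : ℝ) (u v : Fin d → ℝ) : ip u (c • v) = c * ip u v := by
  rw [ip_comm, ip_smul_left, ip_comm v u]

lemma ip_cs {d : ℕ} (u v : Fin d → ℝ) : ip u v ≤ l2 u * l2 v := by
  unfold ip l2; exact Real.sum_mul_le_sqrt_mul_sqrt _ _ _

lemma l2_eq_zero {d : ℕ} {v : Fin d → ℝ} (h : l2 v = 0) : v = 0 := by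
  have h2 : (∑ i, v i ^ 2) = 0 := by
    have := l2_sq v; rw [h] at this; simpa using this.symm
  funext i
  have := (Finset.sum_eq_zero_iff_of_nonneg (fun i _ => sq_nonneg (v i))).1 h2 i
    (Finset.mem_univ i)
  exact pow_eq_zero_iff (by norm_num) |>.1 this

lemma ip_expand {d : ℕ} (c c' : ℝ) (u v : Fin d → ℝ) :
    ip (c • u + c' • v) (c • u + c' • v)
      = c ^ 2 * ip u u + 2 * (c * c') * ip u v + c' ^ 2 * ip v v := by
  rw [ip_add_left, ip_add_right, ip_add_right]
  simp only [ip_smul_left, ip_smul_right]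
  rw [ip_comm v u]; ring

lemma l2_le_of_sq_le {d : ℕ} {v : Fin d → ℝ} {c t : ℝ} (hc : 0 ≤ c) (ht : 0 ≤ t)
    (h : l2 v ^ 2 ≤ c ^ 2 * t ^ 2) : l2 v ≤ c * t := by
  nlinarith [l2_nonneg v, mul_nonneg hc ht]

/-! ### RIC facts -/

lemma ric_mem {m n : ℕ} (A : Matrix (Fin m) (Fin n) ℝ) (k : ℕ) :
    0 ≤ RIC A k ∧ ∀ x : Fin n → ℝ, (Function.support x).ncard ≤ k →
      (1 - RIC A k) * l2 x ^ 2 ≤ l2 (A *ᵥ x) ^ 2 ∧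
      l2 (A *ᵥ x) ^ 2 ≤ (1 + RIC A k) * l2 x ^ 2 := by
  set S : Set ℝ := {δ : ℝ | 0 ≤ δ ∧ ∀ x : Fin n → ℝ, (Function.support x).ncard ≤ k →
    (1 - δ) * l2 x ^ 2 ≤ l2 (A *ᵥ x) ^ 2 ∧ l2 (A *ᵥ x) ^ 2 ≤ (1 + δ) * l2 x ^ 2} with hSdef
  have hne : S.Nonempty := by
    refine ⟨max 1 (∑ i, ∑ j, A i j ^ 2), le_trans zero_le_one (le_max_left _ _), fun x _ => ?_⟩
    constructor
    · have h1 : 1 - max 1 (∑ i, ∑ j, A i j ^ 2) ≤ 0 := by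
        have := le_max_left 1 (∑ i, ∑ j, A i j ^ 2); linarith
      nlinarith [sq_nonneg (l2 (A *ᵥ x)), sq_nonneg (l2 x)]
    · have hub : l2 (A *ᵥ x) ^ 2 ≤ (∑ i, ∑ j, A i j ^ 2) * l2 x ^ 2 := by
        rw [l2_sq, l2_sq, Finset.sum_mul]
        apply Finset.sum_le_sum
        intro i _
        have : (A *ᵥ x) i = ∑ j, A i j * x j := by
          simp [Matrix.mulVec, dotProduct]
        rw [this]
        exact Finset.sum_mul_sq_le_sq_mul_sq _ _ _
      have hC : (∑ i, ∑ j, A i j ^ 2) ≤ max 1 (∑ i, ∑ j, A i j ^ 2) := le_max_right _ _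
      nlinarith [sq_nonneg (l2 x)]
  have hbdd : BddBelow S := ⟨0, fun δ hδ => hδ.1⟩
  have hclosed : IsClosed S := by
    have hrw : S = Set.Ici (0:ℝ) ∩ ⋂ x : Fin n → ℝ,
        {δ : ℝ | (Function.support x).ncard ≤ k →
          (1 - δ) * l2 x ^ 2 ≤ l2 (A *ᵥ x) ^ 2 ∧ l2 (A *ᵥ x) ^ 2 ≤ (1 + δ) * l2 x ^ 2} := by
      ext δ; simp [hSdef, Set.mem_iInter, Set.mem_Ici]
    rw [hrw]
    refine isClosed_Ici.inter (isClosed_iInter fun x => ?_)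
    by_cases hP : (Function.support x).ncard ≤ k
    · simp only [hP, forall_true_left]
      have e1 : IsClosed {δ : ℝ | (1 - δ) * l2 x ^ 2 ≤ l2 (A *ᵥ x) ^ 2} :=
        isClosed_le (by continuity) continuous_const
      have e2 : IsClosed {δ : ℝ | l2 (A *ᵥ x) ^ 2 ≤ (1 + δ) * l2 x ^ 2} :=
        isClosed_le continuous_const (by continuity)
      exact e1.inter e2
    · simp [hP]
  exact hclosed.csInf_mem hne hbdd

/-! ### Restricted orthogonality via polarization -/

lemma bilin {m n : ℕ} (A : Matrix (Fin m) (Fin n) ℝ) (δ : ℝ) (S : Set (Fin n))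
    (hδ : 0 ≤ δ)
    (hQ : ∀ w : Fin n → ℝ, Function.support w ⊆ S →
      (1 - δ) * l2 w ^ 2 ≤ l2 (A *ᵥ w) ^ 2 ∧ l2 (A *ᵥ w) ^ 2 ≤ (1 + δ) * l2 w ^ 2)
    (u v : Fin n → ℝ) (hu : Function.support u ⊆ S) (hv : Function.support v ⊆ S) :
    ip u v - ip (A *ᵥ u) (A *ᵥ v) ≤ δ * (l2 u * l2 v) := by
  by_cases hu0 : l2 u = 0
  · rw [l2_eq_zero hu0]
    simp only [ip, Matrix.mulVec_zero, Pi.zero_apply, zero_mul, Finset.sum_const_zero,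
      sub_zero]
    exact mul_nonneg hδ (mul_nonneg (l2_nonneg _) (l2_nonneg _))
  by_cases hv0 : l2 v = 0
  · rw [l2_eq_zero hv0]
    simp only [ip, Matrix.mulVec_zero, Pi.zero_apply, mul_zero, Finset.sum_const_zero,
      sub_zero]
    exact mul_nonneg hδ (mul_nonneg (l2_nonneg _) (l2_nonneg _))
  have hup : 0 < l2 u := lt_of_le_of_ne (l2_nonneg u) (Ne.symm hu0)
  have hvp : 0 < l2 v := lt_of_le_of_ne (l2_nonneg v) (Ne.symm hv0)
  set t := Real.sqrt (l2 v / l2 u) with htdef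
  have ht : 0 < t := Real.sqrt_pos.2 (div_pos hvp hup)
  have ht2 : t ^ 2 = l2 v / l2 u := Real.sq_sqrt (div_pos hvp hup).le
  have hMa : t ^ 2 * ip u u = l2 u * l2 v := by
    rw [ip_self, ht2]; field_simp
  have hMb : (t⁻¹) ^ 2 * ip v v = l2 u * l2 v := by
    rw [ip_self, inv_pow, ht2]
    rw [show (l2 v / l2 u)⁻¹ = l2 u / l2 v by rw [inv_div]]
    field_simp
  have hcc : t * t⁻¹ = 1 := mul_inv_cancel₀ ht.ne'
  -- support facts
  have hsub : ∀ (c c' : ℝ), Function.support (c • u + c' • v) ⊆ S := by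
    intro c c'
    refine subset_trans (Function.support_add _ _) (Set.union_subset ?_ ?_)
    · exact subset_trans (Function.support_smul_subset_right _ _) hu
    · exact subset_trans (Function.support_smul_subset_right _ _) hv
  have q1 := (hQ (t • u + t⁻¹ • v) (hsub t t⁻¹)).1
  have q2' := (hQ (t • u + (-t⁻¹) • v) (hsub t (-t⁻¹))).2
  -- expansions
  have e1 : l2 (t • u + t⁻¹ • v) ^ 2 = 2 * (l2 u * l2 v) + 2 * ip u v := by
    rw [← ip_self, ip_expand, hcc, hMa, hMb]; ring
  have e2 : l2 (t • u + (-t⁻¹) • v) ^ 2 = 2 * (l2 u * l2 v) - 2 * ip u v := by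
    rw [← ip_self, ip_expand]
    have h1 : t ^ 2 * ip u u = l2 u * l2 v := hMa
    have h2 : (-t⁻¹) ^ 2 * ip v v = l2 u * l2 v := by rw [neg_pow]; simpa using hMb
    rw [h1, h2]
    have : t * -t⁻¹ = -1 := by rw [mul_neg, hcc]
    rw [this]; ring
  have eA1 : l2 (A *ᵥ (t • u + t⁻¹ • v)) ^ 2
      = t ^ 2 * ip (A *ᵥ u) (A *ᵥ u) + 2 * ip (A *ᵥ u) (A *ᵥ v)
        + (t⁻¹) ^ 2 * ip (A *ᵥ v) (A *ᵥ v) := by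
    rw [Matrix.mulVec_add, Matrix.mulVec_smul, Matrix.mulVec_smul, ← ip_self, ip_expand, hcc]
    ring
  have eA2 : l2 (A *ᵥ (t • u + (-t⁻¹) • v)) ^ 2
      = t ^ 2 * ip (A *ᵥ u) (A *ᵥ u) - 2 * ip (A *ᵥ u) (A *ᵥ v)
        + (t⁻¹) ^ 2 * ip (A *ᵥ v) (A *ᵥ v) := by
    rw [Matrix.mulVec_add, Matrix.mulVec_smul, Matrix.mulVec_smul, ← ip_self, ip_expand]
    have : t * -t⁻¹ = -1 := by rw [mul_neg, hcc]
    rw [this, neg_pow]; simp; ring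
  rw [e1, eA1] at q1
  rw [e2, eA2] at q2'
  nlinarith [q1, q2']


lemma quad_bound (a b ε δ s : ℝ) (ha : 0 ≤ a) (hb : 0 ≤ b) (hε : 0 ≤ ε)
    (hδ0 : 0 ≤ δ) (hδ1 : δ < 1) (hs : 0 < s) (hs2 : s ^ 2 = 1 - δ ^ 2)
    (key : a ^ 2 ≤ (δ * a + ε) ^ 2 + b ^ 2) : a ≤ b / s + ε / (1 - δ) := by
  have h1δ : 0 < 1 - δ := by linarith
  rw [div_add_div _ _ (ne_of_gt hs) (ne_of_gt h1δ), le_div_iff₀ (by positivity)]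
  by_contra hcon
  push_neg at hcon
  -- hcon : b * (1 - δ) + s * ε < a * (s * (1 - δ))
  have h1 : 0 < a * (1 - δ) - ε := by
    have hb1 : 0 ≤ b * (1 - δ) := mul_nonneg hb h1δ.le
    have : s * ε < a * (s * (1 - δ)) := by linarith
    have h2 : s * ε < s * (a * (1 - δ)) := by ring_nf at this ⊢; linarith
    have := (mul_lt_mul_iff_right₀ hs).1 h2
    linarith
  have h2 : b * (1 - δ) < s * (a * (1 - δ) - ε) := by
    have hb1 : s * (a * (1-δ)) - s * ε = s * (a * (1-δ) - ε) := by ring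
    nlinarith
  have h3 : (b * (1 - δ)) ^ 2 < (s * (a * (1 - δ) - ε)) ^ 2 := by
    nlinarith [mul_nonneg hb h1δ.le, mul_pos hs h1]
  have h4 : (a ^ 2 - (δ * a + ε) ^ 2) * (1 - δ) ^ 2 ≤ b ^ 2 * (1 - δ) ^ 2 := by
    nlinarith [sq_nonneg (1 - δ)]
  have h3' : (b * (1 - δ)) ^ 2 < (1 - δ ^ 2) * (a * (1 - δ) - ε) ^ 2 := by
    have hr : (s * (a * (1 - δ) - ε)) ^ 2 = s ^ 2 * (a * (1 - δ) - ε) ^ 2 := by ring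
    rw [hr, hs2] at h3; exact h3
  nlinarith [mul_nonneg (mul_nonneg hε h1δ.le) h1.le]

end Stmt13Aux

open Stmt13Aux

/-- Theorem (nonnegative projection error bound): if `y = Ax + e` with `x` nonnegative
`k`-sparse and `δ₂ₖ < 1`, and `z*` minimizes `‖y - Az‖₂` over nonnegative `z` with
`supp z ⊆ Λ`, `|Λ| ≤ k`, then
`‖z* - x‖₂ ≤ ‖(z* - x)_{Λᶜ}‖₂ / √(1 - δ₂ₖ²) + √(1 + δ_k)/(1 - δ₂ₖ) ‖e‖₂`. -/
theorem stmt13 {m n k : ℕ} (A : Matrix (Fin m) (Fin n) ℝ)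
    (x : Fin n → ℝ) (e y : Fin m → ℝ) (hy : y = A *ᵥ x + e)
    (hx0 : ∀ i, 0 ≤ x i) (hxs : (Function.support x).ncard ≤ k)
    (hδ2k : RIC A (2 * k) < 1)
    (Λ : Set (Fin n)) (hΛ : Λ.ncard ≤ k)
    (z : Fin n → ℝ) (hz0 : ∀ i, 0 ≤ z i) (hzsupp : Function.support z ⊆ Λ)
    (hzmin : ∀ w : Fin n → ℝ, (∀ i, 0 ≤ w i) → Function.support w ⊆ Λ →
      l2 (y - A *ᵥ z) ≤ l2 (y - A *ᵥ w)) :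
    l2 (z - x) ≤ 1 / Real.sqrt (1 - RIC A (2 * k) ^ 2) * l2 (Λᶜ.indicator (z - x))
      + Real.sqrt (1 + RIC A k) / (1 - RIC A (2 * k)) * l2 e := by
  obtain ⟨hδ0, hspec2⟩ := ric_mem A (2 * k)
  obtain ⟨hδk0, hspeck⟩ := ric_mem A k
  set δ := RIC A (2 * k) with hδdef
  set δk := RIC A k with hδkdef
  set h := z - x with hhdef
  set hΛi := Λ.indicator h with hΛidef
  set hc := Λᶜ.indicator h with hcdef
  set S : Set (Fin n) := Λ ∪ Function.support x with hSdef
  -- sparsity of vectors supported in S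
  have hS2k : ∀ w : Fin n → ℝ, Function.support w ⊆ S → (Function.support w).ncard ≤ 2 * k := by
    intro w hw
    calc (Function.support w).ncard ≤ S.ncard := Set.ncard_le_ncard hw (Set.toFinite _)
      _ ≤ Λ.ncard + (Function.support x).ncard := Set.ncard_union_le _ _
      _ ≤ 2 * k := by omega
  have hQ : ∀ w : Fin n → ℝ, Function.support w ⊆ S →
      (1 - δ) * l2 w ^ 2 ≤ l2 (A *ᵥ w) ^ 2 ∧ l2 (A *ᵥ w) ^ 2 ≤ (1 + δ) * l2 w ^ 2 :=
    fun w hw => hspec2 w (hS2k w hw)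
  -- supports
  have hsupph : Function.support h ⊆ S := by
    intro i hi
    by_cases hiΛ : i ∈ Λ
    · exact Set.mem_union_left _ hiΛ
    · right
      intro hxi
      apply hi
      have hzi : z i = 0 := by
        by_contra hzi; exact hiΛ (hzsupp hzi)
      simp [hhdef, hzi, hxi]
  have hsupphΛ : Function.support hΛi ⊆ Λ := Set.support_indicator_subset
  have hsupphΛS : Function.support hΛi ⊆ S := subset_trans hsupphΛ Set.subset_union_left
  -- KKT / variational inequality: ip (A h) (A hΛi) ≤ ip e (A hΛi)
  have hKKT : ip (A *ᵥ h) (A *ᵥ hΛi) ≤ ip e (A *ᵥ hΛi) := by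
    set w₀ : Fin n → ℝ := Λ.indicator x with hw₀def
    have hΛeq : hΛi = z - w₀ := by
      funext i
      by_cases hiΛ : i ∈ Λ
      · simp [hΛidef, hw₀def, Set.indicator_of_mem hiΛ, hhdef]
      · have hzi : z i = 0 := by
          by_contra hzi; exact hiΛ (hzsupp hzi)
        simp [hΛidef, hw₀def, Set.indicator_of_notMem hiΛ, hzi]
    set r : Fin m → ℝ := y - A *ᵥ z with hrdef
    set d : Fin m → ℝ := A *ᵥ (w₀ - z) with hddef
    have hrd : ∀ t : ℝ, 0 < t → t ≤ 1 → ip r d ≤ t / 2 * ip d d := by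
      intro t ht ht1
      have hfeas0 : ∀ i, 0 ≤ z i + t * (w₀ i - z i) := by
        intro i
        have hw₀i : 0 ≤ w₀ i := Set.indicator_nonneg (fun j _ => hx0 j) i
        nlinarith [hz0 i]
      have hfeass : Function.support (fun i => z i + t * (w₀ i - z i)) ⊆ Λ := by
        intro i hi
        by_contra hiΛ
        apply hi
        have hzi : z i = 0 := by by_contra hzi; exact hiΛ (hzsupp hzi)
        have hwi : w₀ i = 0 := Set.indicator_of_notMem hiΛ _
        simp [hzi, hwi]
      have hmin := hzmin _ hfeas0 hfeass
      have hveq : y - A *ᵥ (fun i => z i + t * (w₀ i - z i)) = r - t • d := by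
        have : (fun i => z i + t * (w₀ i - z i)) = z + t • (w₀ - z) := by
          funext i; simp [mul_comm]
        rw [this, Matrix.mulVec_add, Matrix.mulVec_smul]
        funext i; simp [hrdef, hddef]; ring
      rw [hveq] at hmin
      have hsq : l2 r ^ 2 ≤ l2 (r - t • d) ^ 2 := by
        have := pow_le_pow_left₀ (l2_nonneg r) hmin 2
        exact this
      have hexp : l2 (r - t • d) ^ 2 = l2 r ^ 2 - 2 * t * ip r d + t ^ 2 * ip d d := by
        rw [l2_sq, l2_sq]
        unfold ip
        rw [Finset.mul_sum, Finset.mul_sum, ← Finset.sum_sub_distrib, ← Finset.sum_add_distrib]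
        apply Finset.sum_congr rfl
        intro i _
        simp only [Pi.sub_apply, Pi.smul_apply, smul_eq_mul]
        ring
      rw [hexp] at hsq
      have h2 : 0 ≤ t * (t * ip d d - 2 * ip r d) := by nlinarith
      have h3 : 0 ≤ t * ip d d - 2 * ip r d := by
        by_contra hq
        push_neg at hq
        nlinarith [mul_pos ht (by linarith : (0:ℝ) < -(t * ip d d - 2 * ip r d))]
      linarith
    have hipd : ip r d ≤ 0 := by
      by_contra hp
      push_neg at hp
      have hdd : 0 ≤ ip d d := ip_nonneg_self d
      rcases eq_or_lt_of_le hdd with hdd0 | hddp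
      · have := hrd 1 one_pos le_rfl
        rw [← hdd0] at this
        linarith
      · set t := min 1 (ip r d / ip d d) with htdef
        have htp : 0 < t := lt_min one_pos (div_pos hp hddp)
        have ht1 : t ≤ 1 := min_le_left _ _
        have := hrd t htp ht1
        have ht2 : t ≤ ip r d / ip d d := min_le_right _ _
        have : ip r d ≤ (ip r d / ip d d) / 2 * ip d d := by
          calc ip r d ≤ t / 2 * ip d d := this
            _ ≤ (ip r d / ip d d) / 2 * ip d d := by
                apply mul_le_mul_of_nonneg_right _ hdd
                linarith
        have heq : (ip r d / ip d d) / 2 * ip d d = ip r d / 2 := by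
          field_simp [hddp.ne']
        rw [heq] at this
        linarith
    -- translate
    have hd2 : d = -(A *ᵥ hΛi) := by
      rw [hΛeq, hddef]
      rw [show w₀ - z = -(z - w₀) by ring, Matrix.mulVec_neg]
    have hr2 : r = e - A *ᵥ h := by
      rw [hrdef, hy, hhdef, Matrix.mulVec_sub]
      funext i; simp; ring
    rw [hd2, hr2] at hipd
    have : ip (e - A *ᵥ h) (-(A *ᵥ hΛi)) = -(ip e (A *ᵥ hΛi) - ip (A *ᵥ h) (A *ᵥ hΛi)) := by
      rw [show -(A *ᵥ hΛi) = (-1 : ℝ) • (A *ᵥ hΛi) by funext i; simp,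
        ip_smul_right, ip_sub_left]
      ring
    rw [this] at hipd
    linarith
  -- l2 hΛi ^ 2 = ip h hΛi
  have hipΛ : ip h hΛi = l2 hΛi ^ 2 := by
    rw [← ip_self]
    unfold ip
    apply Finset.sum_congr rfl
    intro i _
    by_cases hiΛ : i ∈ Λ
    · simp [hΛidef, Set.indicator_of_mem hiΛ]
    · simp [hΛidef, Set.indicator_of_notMem hiΛ]
  -- restricted orthogonality
  have hbilin := bilin A δ S hδ0 hQ h hΛi hsupph hsupphΛS
  -- ‖A hΛi‖ ≤ √(1+δk) ‖hΛi‖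
  have hAΛ : l2 (A *ᵥ hΛi) ≤ Real.sqrt (1 + δk) * l2 hΛi := by
    have hsp : (Function.support hΛi).ncard ≤ k :=
      le_trans (Set.ncard_le_ncard hsupphΛ (Set.toFinite _)) hΛ
    have := (hspeck hΛi hsp).2
    apply l2_le_of_sq_le (Real.sqrt_nonneg _) (l2_nonneg _)
    rw [Real.sq_sqrt (by linarith : (0:ℝ) ≤ 1 + δk)]
    exact this
  -- Cauchy–Schwarz : ip e (A hΛi) ≤ ‖e‖ ‖A hΛi‖
  have hcs : ip e (A *ᵥ hΛi) ≤ l2 e * l2 (A *ᵥ hΛi) := ip_cs _ _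
  set ε := Real.sqrt (1 + δk) * l2 e with hεdef
  have hε0 : 0 ≤ ε := mul_nonneg (Real.sqrt_nonneg _) (l2_nonneg _)
  -- ‖hΛi‖² ≤ δ‖h‖‖hΛi‖ + ε‖hΛi‖
  have hstep : l2 hΛi ^ 2 ≤ δ * l2 h * l2 hΛi + ε * l2 hΛi := by
    have c1 : l2 e * l2 (A *ᵥ hΛi) ≤ l2 e * (Real.sqrt (1 + δk) * l2 hΛi) :=
      mul_le_mul_of_nonneg_left hAΛ (l2_nonneg _)
    calc l2 hΛi ^ 2 = ip h hΛi := hipΛ.symm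
      _ ≤ δ * (l2 h * l2 hΛi) + ip (A *ᵥ h) (A *ᵥ hΛi) := by linarith [hbilin]
      _ ≤ δ * (l2 h * l2 hΛi) + ip e (A *ᵥ hΛi) := by linarith [hKKT]
      _ ≤ δ * (l2 h * l2 hΛi) + l2 e * l2 (A *ᵥ hΛi) := by linarith [hcs]
      _ ≤ δ * l2 h * l2 hΛi + ε * l2 hΛi := by
          rw [hεdef]; nlinarith [c1]
  -- ‖hΛi‖ ≤ δ‖h‖ + ε
  have hstep2 : l2 hΛi ≤ δ * l2 h + ε := by
    rcases eq_or_lt_of_le (l2_nonneg hΛi) with h0 | hpos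
    · rw [← h0]
      exact add_nonneg (mul_nonneg hδ0 (l2_nonneg h)) hε0
    · have := hstep
      nlinarith
  -- Pythagoras
  have hpyth : l2 h ^ 2 = l2 hΛi ^ 2 + l2 hc ^ 2 := by
    rw [l2_sq, l2_sq, l2_sq, ← Finset.sum_add_distrib]
    apply Finset.sum_congr rfl
    intro i _
    by_cases hiΛ : i ∈ Λ
    · have : i ∉ Λᶜ := by simpa using hiΛ
      simp [hΛidef, hcdef, Set.indicator_of_mem hiΛ, Set.indicator_of_notMem this]
    · have : i ∈ Λᶜ := by simpa using hiΛ
      simp [hΛidef, hcdef, Set.indicator_of_notMem hiΛ, Set.indicator_of_mem this]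
  -- final quadratic
  have hδ2 : 0 < 1 - δ ^ 2 := by nlinarith
  set s := Real.sqrt (1 - δ ^ 2) with hsdef
  have hs : 0 < s := Real.sqrt_pos.2 hδ2
  have hs2 : s ^ 2 = 1 - δ ^ 2 := Real.sq_sqrt hδ2.le
  have hkey : l2 h ^ 2 ≤ (δ * l2 h + ε) ^ 2 + l2 hc ^ 2 := by
    have hsq : l2 hΛi ^ 2 ≤ (δ * l2 h + ε) ^ 2 := by
      have hrhs : 0 ≤ δ * l2 h + ε := add_nonneg (mul_nonneg hδ0 (l2_nonneg h)) hε0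
      nlinarith [l2_nonneg hΛi]
    linarith [hpyth]
  have hfinal := quad_bound (l2 h) (l2 hc) ε δ s (l2_nonneg h) (l2_nonneg hc) hε0
    hδ0 hδ2k hs hs2 hkey
  calc l2 h ≤ l2 hc / s + ε / (1 - δ) := hfinal
    _ = 1 / s * l2 hc + Real.sqrt (1 + δk) / (1 - δ) * l2 e := by
        rw [hεdef]; ring
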